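/- Let 0<β<1, 0≤λ<1, z0∈D, and let γ: z=z(t), 0≤t≤1, be a C¹ curve in D with z(0)=0 and z(1)=z0. Then V(z0,λ,β) is contained in the closed disk {w∈ℂ : |w - C(λ,γ,β)| ≤ R(λ,γ,β)}, where C(λ,γ,β)=∫_0^1 c(z(t),λ,β) z'(t) dt and R(λ,γ,β)=∫_0^1 r(z(t),λ,β) |z'(t)| dt. -/

import Mathlib

open Complex Set MeasureTheory

noncomputable section

/-- The open unit disk in the complex plane. -/
def unitDisk : Set ℂ := {z : ℂ | ‖z‖ < 1}

/-- Integral of `g` along the segment from `0` to `z0`: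
`∫_0^{z0} g(ξ) dξ = ∫_0^1 z0 · g(t z0) dt`. -/
def segInt (g : ℂ → ℂ) (z0 : ℂ) : ℂ :=
  ∫ t in (0:ℝ)..1, z0 * g ((t : ℂ) * z0)

/-- The branch of `log f'` vanishing at the origin, evaluated at `z0`:
`log f'(z0) = ∫_0^{z0} f''(ξ)/f'(ξ) dξ`. -/
def logDerivAt (f : ℂ → ℂ) (z0 : ℂ) : ℂ :=
  segInt (fun ξ => deriv (deriv f) ξ / deriv f ξ) z0

/-- The class `F(λ,β)`: analytic `f` on the unit disk with `f(0)=0`, `f'(0)=1`,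
`f''(0)=2λ(1-β)`, nonvanishing derivative, and `Re(1 + z f''(z)/f'(z)) > β`. -/
def IsInF (lam beta : ℝ) (f : ℂ → ℂ) : Prop :=
  DifferentiableOn ℂ f unitDisk ∧ f 0 = 0 ∧ deriv f 0 = 1 ∧
    deriv (deriv f) 0 = 2 * (lam : ℂ) * (1 - (beta : ℂ)) ∧
    (∀ z ∈ unitDisk, deriv f z ≠ 0) ∧
    (∀ z ∈ unitDisk, beta < (1 + z * deriv (deriv f) z / deriv f z).re)

/-- The region of variability `V(z0,λ,β) = {log f'(z0) : f ∈ F(λ,β)}`. -/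
def V (z0 : ℂ) (lam beta : ℝ) : Set ℂ :=
  {w : ℂ | ∃ f : ℂ → ℂ, IsInF lam beta f ∧ logDerivAt f z0 = w}

/-- The center function `c(z,λ,β)`. -/
def cval (z : ℂ) (lam beta : ℝ) : ℂ :=
  ((2 * (1 - beta) : ℝ) : ℂ) *
    (((lam * (1 - ‖z‖ ^ 2) : ℝ) : ℂ) +
      ((‖z‖ ^ 2 - lam ^ 2 : ℝ) : ℂ) * (starRingEnd ℂ) z) /
    (((1 - ‖z‖ ^ 2) * (1 - 2 * lam * z.re + ‖z‖ ^ 2) : ℝ) : ℂ)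

/-- The radius function `r(z,λ,β)`. -/
def rval (z : ℂ) (lam beta : ℝ) : ℝ :=
  2 * (1 - beta) * (1 - lam ^ 2) * ‖z‖ /
    ((1 - ‖z‖ ^ 2) * (1 - 2 * lam * z.re + ‖z‖ ^ 2))

/-!
For `f ∈ F(λ,β)` put `h = f''/f'`. The condition `Re(1 + ζh) > β` says that
`ω(ζ) = ζh(ζ)/(ζh(ζ) + 2(1-β))` maps the disk into itself with `ω(0) = 0`, so by the Schwarz lemma
`w = ω/ζ` maps the disk into the closed disk, now with `w(0) = λ`. Schwarz–Pick at the origin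
confines `g = (w-λ)/(1-λw)` to `|g(ζ)| ≤ |ζ|`, and `h(ζ)` is a Möbius function of `g(ζ)`: the
image of the disk `|g| ≤ |ζ|` is the disk with center `c(ζ,λ,β)` and radius `r(ζ,λ,β)`. Since `h`
has a primitive on the disk, `log f'(z0)` is the integral of `h` along any curve from `0` to `z0`,
and integrating the pointwise bound along the curve gives the claim.
-/

open Metric ComplexConjugate

theorem unitDisk_eq_ball : unitDisk = ball 0 1 := by
  ext z
  simp [unitDisk]

theorem integral_comp_mul_deriv_eq_sub {U : Set ℂ} {F h : ℂ → ℂ} {γ γ' : ℝ → ℂ} {a b : ℝ}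
    (hab : a ≤ b) (hF : ∀ w ∈ U, HasDerivAt F (h w) w) (hh : ContinuousOn h U)
    (hγ : ∀ t ∈ Icc a b, HasDerivWithinAt γ (γ' t) (Icc a b) t)
    (hγ' : ContinuousOn γ' (Icc a b)) (hγU : MapsTo γ (Icc a b) U) :
    ∫ t in a..b, h (γ t) * γ' t = F (γ b) - F (γ a) := by
  have hFγ : ∀ t ∈ Icc a b, HasDerivWithinAt (F ∘ γ) (h (γ t) * γ' t) (Icc a b) t :=
    fun t ht => (hF _ (hγU ht)).comp_hasDerivWithinAt t (hγ t ht)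
  refine intervalIntegral.integral_eq_sub_of_hasDerivAt_of_le hab
    (fun t ht => (hFγ t ht).continuousWithinAt) (fun t ht => ?_) ?_
  · exact (hFγ t (Ioo_subset_Icc_self ht)).hasDerivAt (Icc_mem_nhds ht.1 ht.2)
  · refine ContinuousOn.intervalIntegrable_of_Icc hab ((hh.comp ?_ hγU).mul hγ')
    exact fun t ht => (hγ t ht).continuousWithinAt

theorem segInt_eq_sub {U : Set ℂ} {F h : ℂ → ℂ} {z0 : ℂ}
    (hF : ∀ w ∈ U, HasDerivAt F (h w) w) (hh : ContinuousOn h U)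
    (hseg : ∀ t ∈ Icc (0:ℝ) 1, (t : ℂ) * z0 ∈ U) :
    segInt h z0 = F z0 - F 0 := by
  have hγ : ∀ t : ℝ, HasDerivAt (fun s : ℝ => (s : ℂ) * z0) z0 t := fun t => by
    simpa using (hasDerivAt_id (t : ℂ)).comp_ofReal.mul_const z0
  have := integral_comp_mul_deriv_eq_sub zero_le_one hF hh (fun t _ => (hγ t).hasDerivWithinAt)
    continuousOn_const hseg
  simp only [Complex.ofReal_one, one_mul, Complex.ofReal_zero, zero_mul] at this
  rw [segInt, ← this]
  simp_rw [mul_comm z0]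

theorem dist_integral_mul_le {φ ψ v : ℝ → ℂ} {ρ : ℝ → ℝ} {a b : ℝ} (hab : a ≤ b)
    (hφ : ContinuousOn φ (Icc a b)) (hψ : ContinuousOn ψ (Icc a b))
    (hρ : ContinuousOn ρ (Icc a b)) (hv : ContinuousOn v (Icc a b))
    (hle : ∀ t ∈ Icc a b, ‖φ t - ψ t‖ ≤ ρ t) :
    dist (∫ t in a..b, φ t * v t) (∫ t in a..b, ψ t * v t) ≤ ∫ t in a..b, ρ t * ‖v t‖ := by
  rw [dist_eq_norm, ← intervalIntegral.integral_sub
    ((hφ.fun_mul hv).intervalIntegrable_of_Icc (μ := volume) hab)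
    ((hψ.fun_mul hv).intervalIntegrable_of_Icc (μ := volume) hab)]
  refine intervalIntegral.norm_integral_le_of_norm_le hab (ae_of_all _ fun t ht => ?_)
    ((hρ.mul hv.norm).intervalIntegrable_of_Icc hab)
  rw [← sub_mul, norm_mul]
  exact mul_le_mul_of_nonneg_right (hle t (Ioc_subset_Icc_self ht)) (norm_nonneg _)

theorem sq_norm_one_sub_conj_mul_sub_sq_norm_sub (a u : ℂ) :
    ‖1 - conj a * u‖ ^ 2 - ‖u - a‖ ^ 2 = (1 - ‖a‖ ^ 2) * (1 - ‖u‖ ^ 2) := by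
  apply Complex.ofReal_injective
  push_cast
  simp only [← Complex.mul_conj', map_sub, map_mul, map_one, Complex.conj_conj]
  ring

theorem norm_sub_le_norm_one_sub_conj_mul {a u : ℂ} (ha : ‖a‖ < 1) (hu : ‖u‖ ≤ 1) :
    ‖u - a‖ ≤ ‖1 - conj a * u‖ := by
  have hid := sq_norm_one_sub_conj_mul_sub_sq_norm_sub a u
  have : 0 ≤ (1 - ‖a‖ ^ 2) * (1 - ‖u‖ ^ 2) := by
    apply mul_nonneg <;> nlinarith [norm_nonneg a, norm_nonneg u]
  exact sq_le_sq₀ (norm_nonneg _) (norm_nonneg _) |>.mp (by linarith)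

theorem one_sub_conj_mul_ne_zero {a u : ℂ} (ha : ‖a‖ < 1) (hu : ‖u‖ ≤ 1) :
    1 - conj a * u ≠ 0 := by
  refine sub_ne_zero.mpr fun h => ?_
  have : ‖conj a * u‖ < 1 := by
    rw [norm_mul, Complex.norm_conj]
    nlinarith [norm_nonneg a, norm_nonneg u]
  simp [← h] at this

/-- The Schwarz–Pick lemma at the origin. -/
theorem norm_mobius_le_norm_of_mapsTo {w : ℂ → ℂ} {a ζ : ℂ} (ha : ‖a‖ < 1)
    (hd : DifferentiableOn ℂ w (ball 0 1)) (hmaps : MapsTo w (ball 0 1) (closedBall 0 1))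
    (h0 : w 0 = a) (hζ : ζ ∈ ball (0:ℂ) 1) :
    ‖(w ζ - a) / (1 - conj a * w ζ)‖ ≤ ‖ζ‖ := by
  have hw : ∀ ξ ∈ ball (0:ℂ) 1, ‖w ξ‖ ≤ 1 := fun ξ hξ => mem_closedBall_zero_iff.mp (hmaps hξ)
  refine Complex.norm_le_norm_of_mapsTo_ball (f := fun ξ => (w ξ - a) / (1 - conj a * w ξ))
    ?_ (fun ξ hξ => ?_) (by simp [h0]) (mem_ball_zero_iff.mp hζ)
  · exact (hd.sub_const a).div ((hd.const_mul _).const_sub 1)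
      fun ξ hξ => one_sub_conj_mul_ne_zero ha (hw ξ hξ)
  · rw [mem_closedBall_zero_iff, norm_div]
    exact div_le_one_of_le₀ (norm_sub_le_norm_one_sub_conj_mul ha (hw ξ hξ)) (norm_nonneg _)

theorem mapsTo_closedBall_of_mapsTo_mul {w : ℂ → ℂ} (hd : DifferentiableOn ℂ w (ball 0 1))
    (hmaps : MapsTo (fun ξ => ξ * w ξ) (ball 0 1) (closedBall 0 1)) :
    MapsTo w (ball 0 1) (closedBall 0 1) := by
  intro ξ hξ
  have hmul : DifferentiableOn ℂ (fun ξ => ξ * w ξ) (ball 0 1) := differentiableOn_id.fun_mul hd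
  have hdslope := Complex.norm_dslope_le_div_of_mapsTo_ball hmul (by simpa using hmaps) hξ
  rw [div_one] at hdslope
  rw [mem_closedBall_zero_iff]
  rcases eq_or_ne ξ 0 with rfl | hne
  · have hw0 : HasDerivAt (fun ξ => ξ * w ξ) (w 0) 0 := by
      simpa using (hasDerivAt_id' (0 : ℂ)).fun_mul
        (hd.differentiableAt (ball_mem_nhds 0 one_pos)).hasDerivAt
    rwa [dslope_same, hw0.deriv] at hdslope
  · simpa [dslope_of_ne _ hne, slope, hne] using hdslope

theorem norm_lt_norm_add_two_mul_one_sub {x : ℂ} {beta : ℝ} (hbeta : beta < 1)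
    (hx : beta < (1 + x).re) : ‖x‖ < ‖x + 2 * (1 - beta)‖ := by
  refine lt_of_pow_lt_pow_left₀ 2 (norm_nonneg _) ?_
  rw [Complex.add_re, Complex.one_re] at hx
  simp only [Complex.sq_norm, Complex.normSq_apply, Complex.add_re, Complex.add_im,
    Complex.mul_re, Complex.mul_im, Complex.sub_re, Complex.sub_im, Complex.ofReal_re,
    Complex.ofReal_im, Complex.one_re, Complex.one_im, Complex.re_ofNat, Complex.im_ofNat]
  nlinarith

theorem norm_mobius_sub_center_le {A B C D u : ℂ} {s : ℝ} (hu : ‖u‖ ≤ s) (hs : ‖C‖ * s < ‖D‖) :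
    ‖(A * u + B) / (C * u + D)
        - (B * conj D - A * conj C * s ^ 2) / (‖D‖ ^ 2 - ‖C‖ ^ 2 * s ^ 2 : ℝ)‖
      ≤ ‖A * D - B * C‖ * s / (‖D‖ ^ 2 - ‖C‖ ^ 2 * s ^ 2) := by
  have hs0 : 0 ≤ s := (norm_nonneg u).trans hu
  have hΔ : 0 < ‖D‖ ^ 2 - ‖C‖ ^ 2 * s ^ 2 := by nlinarith [mul_nonneg (norm_nonneg C) hs0]
  have hden : C * u + D ≠ 0 := by
    refine fun h => (lt_irrefl ‖D‖) ?_
    calc ‖D‖ = ‖C * u‖ := by rw [eq_neg_of_add_eq_zero_right h, norm_neg]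
      _ ≤ ‖C‖ * s := by rw [norm_mul]; exact mul_le_mul_of_nonneg_left hu (norm_nonneg C)
      _ < ‖D‖ := hs
  have hdiff : (A * u + B) / (C * u + D)
      - (B * conj D - A * conj C * s ^ 2) / (‖D‖ ^ 2 - ‖C‖ ^ 2 * s ^ 2 : ℝ)
      = (A * D - B * C) * (conj D * u + conj C * s ^ 2)
        / ((C * u + D) * (‖D‖ ^ 2 - ‖C‖ ^ 2 * s ^ 2 : ℝ)) := by
    rw [div_sub_div _ _ hden (by exact_mod_cast hΔ.ne')]
    push_cast
    simp only [← Complex.mul_conj']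
    ring
  have hkey : ‖conj D * u + conj C * s ^ 2‖ ≤ s * ‖C * u + D‖ := by
    have hid : (s * ‖C * u + D‖) ^ 2 - ‖conj D * u + conj C * s ^ 2‖ ^ 2
        = (s ^ 2 - ‖u‖ ^ 2) * (‖D‖ ^ 2 - ‖C‖ ^ 2 * s ^ 2) := by
      rw [mul_pow]
      apply Complex.ofReal_injective
      push_cast
      simp only [← Complex.mul_conj', map_add, map_mul, Complex.conj_conj,
        Complex.conj_ofReal, map_pow]
      ring
    have : 0 ≤ (s ^ 2 - ‖u‖ ^ 2) * (‖D‖ ^ 2 - ‖C‖ ^ 2 * s ^ 2) :=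
      mul_nonneg (by nlinarith [norm_nonneg u]) hΔ.le
    exact sq_le_sq₀ (norm_nonneg _) (by positivity) |>.mp (by linarith)
  rw [hdiff, norm_div, norm_mul, norm_mul, Complex.norm_real, Real.norm_of_nonneg hΔ.le,
    div_le_div_iff₀ (by positivity) hΔ]
  have := mul_le_mul_of_nonneg_left hkey (norm_nonneg (A * D - B * C))
  calc ‖A * D - B * C‖ * ‖conj D * u + conj C * s ^ 2‖ * (‖D‖ ^ 2 - ‖C‖ ^ 2 * s ^ 2)
      ≤ ‖A * D - B * C‖ * (s * ‖C * u + D‖) * (‖D‖ ^ 2 - ‖C‖ ^ 2 * s ^ 2) := by gcongr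
    _ = _ := by ring

theorem eq_div_of_mul_add_eq {H W ζ c : ℂ} {lam : ℝ} (hlam : |lam| < 1) (hW1 : ‖W‖ ≤ 1)
    (hc : c ≠ 0) (hW : W * (ζ * H + c) = H) :
    H = (c * ((W - lam) / (1 - lam * W)) + c * lam)
      / ((lam - ζ) * ((W - lam) / (1 - lam * W)) + (1 - lam * ζ)) := by
  have hlamW : 1 - lam * W ≠ 0 := by
    simpa using one_sub_conj_mul_ne_zero (a := lam) (by simpa using hlam) hW1
  have hlam2 : (1 - lam ^ 2 : ℂ) ≠ 0 := mod_cast (by nlinarith [abs_lt.mp hlam] : 1 - lam ^ 2 ≠ 0)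
  have hζW : 1 - ζ * W ≠ 0 := by
    refine sub_ne_zero.mpr fun h => ?_
    have hWc : W * c = 0 := by linear_combination hW + H * h
    simp [(mul_eq_zero.mp hWc).resolve_right hc] at h
  have hH : H = c * W / (1 - ζ * W) := by rw [eq_div_iff hζW]; linear_combination -hW
  have hnum : c * ((W - lam) / (1 - lam * W)) + c * lam
      = c * (1 - lam ^ 2) * W / (1 - lam * W) := by
    rw [eq_div_iff hlamW, add_mul, mul_assoc, div_mul_cancel₀ _ hlamW]
    ring
  have hden : (lam - ζ) * ((W - lam) / (1 - lam * W)) + (1 - lam * ζ)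
      = (1 - lam ^ 2) * (1 - ζ * W) / (1 - lam * W) := by
    rw [eq_div_iff hlamW, add_mul, mul_assoc, div_mul_cancel₀ _ hlamW]
    ring
  rw [hnum, hden, hH, div_div_div_cancel_right₀ hlamW, mul_right_comm,
    mul_comm (1 - (lam : ℂ) ^ 2), mul_div_mul_right _ _ hlam2]

theorem sq_norm_one_sub_mul_sub_sq_norm_sub_mul (lam : ℝ) (ζ : ℂ) :
    ‖1 - lam * ζ‖ ^ 2 - ‖lam - ζ‖ ^ 2 * ‖ζ‖ ^ 2
      = (1 - ‖ζ‖ ^ 2) * (1 - 2 * lam * ζ.re + ‖ζ‖ ^ 2) := by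
  simp only [Complex.sq_norm, Complex.normSq_apply, Complex.sub_re, Complex.sub_im,
    Complex.mul_re, Complex.mul_im, Complex.ofReal_re, Complex.ofReal_im, Complex.one_re,
    Complex.one_im]
  ring

theorem cval_denom_pos {lam : ℝ} (hlam : |lam| < 1) {ζ : ℂ} (hζ : ‖ζ‖ < 1) :
    0 < (1 - ‖ζ‖ ^ 2) * (1 - 2 * lam * ζ.re + ‖ζ‖ ^ 2) := by
  have hre : lam * ζ.re ≤ |lam| * ‖ζ‖ :=
    (le_abs_self _).trans (abs_mul lam ζ.re ▸
      mul_le_mul_of_nonneg_left (Complex.abs_re_le_norm ζ) (abs_nonneg _))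
  apply mul_pos <;> nlinarith [norm_nonneg ζ, sq_nonneg (‖ζ‖ - |lam|), sq_abs lam, abs_nonneg lam]

theorem norm_sub_cval_le_rval {lam beta : ℝ} (hlam : |lam| < 1) (hbeta : beta ≤ 1) {ζ g : ℂ}
    (hζ : ‖ζ‖ < 1) (hg : ‖g‖ ≤ ‖ζ‖) :
    ‖(2 * (1 - beta) * g + 2 * (1 - beta) * lam) / ((lam - ζ) * g + (1 - lam * ζ))
      - cval ζ lam beta‖ ≤ rval ζ lam beta := by
  have hΔ := sq_norm_one_sub_mul_sub_sq_norm_sub_mul lam ζ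
  have hpos := cval_denom_pos hlam hζ
  have hs : ‖(lam : ℂ) - ζ‖ * ‖ζ‖ < ‖1 - lam * ζ‖ :=
    lt_of_pow_lt_pow_left₀ 2 (norm_nonneg _) (by rw [mul_pow]; linarith)
  convert norm_mobius_sub_center_le (A := 2 * (1 - beta)) (B := 2 * (1 - beta) * lam) hg hs
    using 2
  · rw [hΔ, cval]
    push_cast
    simp only [← Complex.mul_conj', map_sub, map_mul, map_one, Complex.conj_ofReal]
    ring
  · rw [hΔ, rval]
    congr 1
    rw [show 2 * (1 - (beta : ℂ)) * (1 - lam * ζ) - 2 * (1 - beta) * lam * (lam - ζ)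
      = ((2 * (1 - beta) * (1 - lam ^ 2) : ℝ) : ℂ) by push_cast; ring, Complex.norm_real,
      Real.norm_of_nonneg (mul_nonneg (by linarith) (by nlinarith [abs_lt.mp hlam]))]

theorem continuousOn_cval {lam : ℝ} (hlam : |lam| < 1) (beta : ℝ) :
    ContinuousOn (fun ζ => cval ζ lam beta) (ball 0 1) := by
  refine ContinuousOn.div (by fun_prop) (by fun_prop) fun ζ hζ => ?_
  exact_mod_cast (cval_denom_pos hlam (mem_ball_zero_iff.mp hζ)).ne'

theorem continuousOn_rval {lam : ℝ} (hlam : |lam| < 1) (beta : ℝ) :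
    ContinuousOn (fun ζ => rval ζ lam beta) (ball 0 1) :=
  ContinuousOn.div (by fun_prop) (by fun_prop) fun ζ hζ =>
    (cval_denom_pos hlam (mem_ball_zero_iff.mp hζ)).ne'

theorem norm_sub_cval_le_rval_of_re_gt {h : ℂ → ℂ} {lam beta : ℝ} (hlam : |lam| < 1)
    (hbeta : beta < 1) (hd : DifferentiableOn ℂ h (ball 0 1))
    (h0 : h 0 = 2 * lam * (1 - beta)) (hre : ∀ ξ ∈ ball (0:ℂ) 1, beta < (1 + ξ * h ξ).re)
    {ζ : ℂ} (hζ : ζ ∈ ball (0:ℂ) 1) :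
    ‖h ζ - cval ζ lam beta‖ ≤ rval ζ lam beta := by
  have hnorm : ∀ ξ ∈ ball (0:ℂ) 1, ‖ξ * h ξ‖ < ‖ξ * h ξ + 2 * (1 - beta)‖ := fun ξ hξ =>
    norm_lt_norm_add_two_mul_one_sub hbeta (hre ξ hξ)
  have hden : ∀ ξ ∈ ball (0:ℂ) 1, ξ * h ξ + 2 * (1 - beta) ≠ 0 := fun ξ hξ =>
    norm_pos_iff.mp ((norm_nonneg _).trans_lt (hnorm ξ hξ))
  -- `ξ w(ξ)` is the Cayley transform `(p - 1)/(p + 1)` of `p = (1 + ξ h(ξ) - β)/(1 - β)`,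
  -- which has positive real part
  set w : ℂ → ℂ := fun ξ => h ξ / (ξ * h ξ + 2 * (1 - beta))
  have hwd : DifferentiableOn ℂ w (ball 0 1) :=
    hd.div ((differentiableOn_id.fun_mul hd).add_const _) hden
  have hw : MapsTo w (ball 0 1) (closedBall 0 1) := by
    refine mapsTo_closedBall_of_mapsTo_mul hwd fun ξ hξ => ?_
    rw [mem_closedBall_zero_iff]
    change ‖ξ * (h ξ / (ξ * h ξ + 2 * (1 - beta)))‖ ≤ 1
    rw [← mul_div_assoc, norm_div]
    exact div_le_one_of_le₀ (hnorm ξ hξ).le (norm_nonneg _)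
  have hβ : (1 - beta : ℂ) ≠ 0 := mod_cast (sub_pos.2 hbeta).ne'
  have hw0 : w 0 = lam := by
    simp only [w, h0, zero_mul, zero_add]
    field_simp
  have hlamC : ‖(lam : ℂ)‖ < 1 := by rwa [Complex.norm_real, Real.norm_eq_abs]
  have hg := norm_mobius_le_norm_of_mapsTo hlamC hwd hw hw0 hζ
  rw [Complex.conj_ofReal] at hg
  convert norm_sub_cval_le_rval hlam hbeta.le (mem_ball_zero_iff.mp hζ) hg using 3
  exact eq_div_of_mul_add_eq hlam (mem_closedBall_zero_iff.mp (hw hζ))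
    (mul_ne_zero two_ne_zero hβ) (div_mul_cancel₀ _ (hden ζ hζ))

namespace IsInF

variable {lam beta : ℝ} {f : ℂ → ℂ}

theorem differentiableOn_logDeriv (hf : IsInF lam beta f) :
    DifferentiableOn ℂ (fun ζ => deriv (deriv f) ζ / deriv f ζ) (ball 0 1) := by
  obtain ⟨hdf, -, -, -, hfne, -⟩ := hf
  rw [unitDisk_eq_ball] at hdf hfne
  have hd1 := (hdf.analyticOnNhd isOpen_ball).deriv
  exact hd1.deriv.differentiableOn.div hd1.differentiableOn hfne

theorem norm_logDeriv_sub_cval_le_rval (hf : IsInF lam beta f) (hlam : |lam| < 1)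
    (hbeta : beta < 1) {ζ : ℂ} (hζ : ζ ∈ ball (0:ℂ) 1) :
    ‖deriv (deriv f) ζ / deriv f ζ - cval ζ lam beta‖ ≤ rval ζ lam beta := by
  have hd := hf.differentiableOn_logDeriv
  obtain ⟨-, -, hf'0, hf''0, -, hre⟩ := hf
  refine norm_sub_cval_le_rval_of_re_gt hlam hbeta hd (by simp [hf'0, hf''0]) (fun ξ hξ => ?_) hζ
  rw [← mul_div_assoc]
  exact hre ξ (by rwa [unitDisk_eq_ball])

end IsInF

theorem V_subset_closedBall_general (beta lam : ℝ) (hbeta : 0 < beta ∧ beta < 1)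
    (hlam : 0 ≤ lam ∧ lam < 1) (z0 : ℂ)
    (z : ℝ → ℂ) (hz : ContDiffOn ℝ 1 z (Set.Icc 0 1))
    (hmem : ∀ t ∈ Set.Icc (0:ℝ) 1, z t ∈ unitDisk)
    (h0 : z 0 = 0) (h1 : z 1 = z0) :
    V z0 lam beta ⊆
      Metric.closedBall
        (∫ t in (0:ℝ)..1, cval (z t) lam beta * derivWithin z (Set.Icc 0 1) t)
        (∫ t in (0:ℝ)..1, rval (z t) lam beta * ‖derivWithin z (Set.Icc 0 1) t‖) := by
  rintro _ ⟨f, hf, rfl⟩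
  have hlam' : |lam| < 1 := abs_lt.mpr ⟨by linarith, hlam.2⟩
  rw [unitDisk_eq_ball] at hmem
  have hd := hf.differentiableOn_logDeriv
  obtain ⟨F, hF⟩ := hd.isExactOn_ball
  have hseg : ∀ t ∈ Icc (0:ℝ) 1, (t : ℂ) * z0 ∈ ball (0:ℂ) 1 := fun t ht => by
    have hz0 := mem_ball_zero_iff.mp (h1 ▸ hmem 1 (right_mem_Icc.mpr zero_le_one))
    rw [mem_ball_zero_iff, norm_mul, Complex.norm_real, Real.norm_of_nonneg ht.1]
    nlinarith [norm_nonneg z0, ht.2]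
  have hz' : ContinuousOn (derivWithin z (Icc 0 1)) (Icc 0 1) :=
    hz.continuousOn_derivWithin (uniqueDiffOn_Icc one_pos) le_rfl
  have hlog : logDerivAt f z0
      = ∫ t in (0:ℝ)..1, deriv (deriv f) (z t) / deriv f (z t) * derivWithin z (Icc 0 1) t := by
    rw [logDerivAt, segInt_eq_sub hF hd.continuousOn hseg, integral_comp_mul_deriv_eq_sub
      zero_le_one hF hd.continuousOn
      (fun t ht => (hz.differentiableOn one_ne_zero t ht).hasDerivWithinAt) hz' hmem, h0, h1]
  rw [mem_closedBall, hlog]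
  exact dist_integral_mul_le zero_le_one (hd.continuousOn.comp hz.continuousOn hmem)
    ((continuousOn_cval hlam' beta).comp hz.continuousOn hmem)
    ((continuousOn_rval hlam' beta).comp hz.continuousOn hmem) hz'
    fun t ht => hf.norm_logDeriv_sub_cval_le_rval hlam' hbeta.2 (hmem t ht)

/-- for a `C¹` curve `γ : z(t)`, `0 ≤ t ≤ 1`, in `D` with `z(0)=0`,
`z(1)=z0`, the set `V(z0,λ,β)` is contained in the closed disk with center
`C(λ,γ,β) = ∫_0^1 c(z(t),λ,β) z'(t) dt` and radius `R(λ,γ,β) = ∫_0^1 r(z(t),λ,β) |z'(t)| dt`. -/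
theorem V_subset_closedBall (beta lam : ℝ) (hbeta : 0 < beta ∧ beta < 1)
    (hlam : 0 ≤ lam ∧ lam < 1) (z0 : ℂ) (hz0 : z0 ∈ unitDisk)
    (z : ℝ → ℂ) (hz : ContDiffOn ℝ 1 z (Set.Icc 0 1))
    (hmem : ∀ t ∈ Set.Icc (0:ℝ) 1, z t ∈ unitDisk)
    (h0 : z 0 = 0) (h1 : z 1 = z0) :
    V z0 lam beta ⊆
      Metric.closedBall
        (∫ t in (0:ℝ)..1, cval (z t) lam beta * derivWithin z (Set.Icc 0 1) t)
        (∫ t in (0:ℝ)..1, rval (z t) lam beta * ‖derivWithin z (Set.Icc 0 1) t‖) :=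
  V_subset_closedBall_general beta lam hbeta hlam z0 z hz hmem h0 h1
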